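/- Let X_1, …, X_m be jointly distributed random variables taking values in finite sets (not necessarily independent), let A ⊆ [m] be nonempty, and let λ ∈ Λ(A) be a fractional partition. Then Σ_{B∈Γ(A)} λ_B · H(X_B | X_{B^c}) ≤ H(X_{[m]}). In particular, the expression H(X_{[m]}) − Σ_{B∈Γ(A)} λ_B H(X_B | X_{B^c}) is nonnegative. -/

import Mathlib

open Finset

/-- Probability that the random variable `X : Ω → α` takes the value `a`,
for a probability mass function `p` on the finite sample space `Ω`. -/
noncomputable def probOf {Ω α : Type*} [Fintype Ω] [DecidableEq α]
    (p : Ω → ℝ) (X : Ω → α) (a : α) : ℝ :=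
  ∑ ω ∈ Finset.univ.filter (fun ω => X ω = a), p ω

/-- Shannon entropy (in nats) of the random variable `X : Ω → α` under the
probability mass function `p`. -/
noncomputable def entropy {Ω α : Type*} [Fintype Ω] [Fintype α] [DecidableEq α]
    (p : Ω → ℝ) (X : Ω → α) : ℝ :=
  ∑ a : α, Real.negMulLog (probOf p X a)

/-- Conditional Shannon entropy `H(X | Y) = H(X, Y) - H(Y)`. -/
noncomputable def condEntropy {Ω α β : Type*} [Fintype Ω]
    [Fintype α] [DecidableEq α] [Fintype β] [DecidableEq β]
    (p : Ω → ℝ) (X : Ω → α) (Y : Ω → β) : ℝ :=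
  entropy p (fun ω => (X ω, Y ω)) - entropy p Y

/-- The tuple random variable `X_B = (X_j : j ∈ B)`. -/
def tupleOn {Ω : Type*} {m : ℕ} {S : Fin m → Type*}
    (X : ∀ j, Ω → S j) (B : Finset (Fin m)) : Ω → (∀ j : B, S j.1) :=
  fun ω j => X j.1 ω

/-- The random variables `X_1, …, X_m` are mutually independent under `p`. -/
def IndepFam {Ω : Type*} [Fintype Ω] {m : ℕ} {S : Fin m → Type*}
    [∀ j, Fintype (S j)] [∀ j, DecidableEq (S j)]
    (p : Ω → ℝ) (X : ∀ j, Ω → S j) : Prop :=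
  ∀ x : ∀ j, S j,
    probOf p (fun ω j => X j ω) x = ∏ j : Fin m, probOf p (X j) (x j)

/-- `Γ(A)`: the family of all nonempty proper subsets `B ⊊ [m]` with `A ⊄ B`. -/
def Gamma (m : ℕ) (A : Finset (Fin m)) : Finset (Finset (Fin m)) :=
  Finset.univ.filter (fun B => B.Nonempty ∧ B ≠ Finset.univ ∧ ¬ A ⊆ B)

/-- `λ ∈ Λ(A)`: a fractional partition, i.e. `0 ≤ λ_B ≤ 1` for every `B ∈ Γ(A)`
and `Σ_{B ∈ Γ(A) : j ∈ B} λ_B = 1` for every `j ∈ [m]`. -/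
def memLambda (m : ℕ) (A : Finset (Fin m)) (lam : Finset (Fin m) → ℝ) : Prop :=
  (∀ B ∈ Gamma m A, 0 ≤ lam B ∧ lam B ≤ 1) ∧
  ∀ j : Fin m, ∑ B ∈ (Gamma m A).filter (fun B => j ∈ B), lam B = 1

/-! Write `h(T) = H(X_T)`. Entropy is submodular, `H(U,V,W) + H(V) ≤ H(U,V) + H(V,W)`
(Gibbs' inequality `log x ≤ x - 1` against the Markov chain `U - V - W` built from the
marginals), so the increments `h(T ∪ {j}) - h(T)` shrink as `T` grows. Telescoping along the
chain `Bᶜ ∪ {0, …, k-1}` thus bounds `H(X_B | X_{Bᶜ}) = h([m]) - h(Bᶜ)` by `∑_{j ∈ B} d_j`,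
where `d_j = H(X_j | X_0, …, X_{j-1})`. Weighting by `λ_B` and exchanging the sums, the
fractional partition condition leaves `∑_j d_j`, which is `H(X_{[m]})` by the chain rule. -/

lemma mul_log_ratio_le {t a b c d : ℝ} (ht : 0 ≤ t) (ha : t ≤ a) (hb : t ≤ b) (hc : t ≤ c)
    (hd : t ≤ d) :
    t * (Real.log b + Real.log c - Real.log a - Real.log d) ≤ t * (b * c / (a * d)) - t := by
  rcases ht.eq_or_lt with rfl | ht
  · simp
  have ha := ht.trans_le ha
  have hb := ht.trans_le hb
  have hc := ht.trans_le hc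
  have hd := ht.trans_le hd
  have hlog := Real.log_le_sub_one_of_pos (show 0 < b * c / (a * d) by positivity)
  rw [Real.log_div (by positivity) (by positivity), Real.log_mul hb.ne' hc.ne',
    Real.log_mul ha.ne' hd.ne'] at hlog
  nlinarith

section Entropy

variable {Ω : Type*} [Fintype Ω] (p : Ω → ℝ)

lemma sum_mul_comp_eq_sum_probOf_mul {α : Type*} [Fintype α] [DecidableEq α]
    (Z : Ω → α) (g : α → ℝ) :
    ∑ ω, p ω * g (Z ω) = ∑ a, probOf p Z a * g a := by
  simp only [probOf, Finset.sum_mul]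
  rw [← Finset.sum_fiberwise Finset.univ Z]
  refine Finset.sum_congr rfl fun a _ => Finset.sum_congr rfl fun ω hω => ?_
  rw [(Finset.mem_filter.mp hω).2]

lemma sum_probOf {α : Type*} [Fintype α] [DecidableEq α] (Z : Ω → α) :
    ∑ a, probOf p Z a = ∑ ω, p ω := by
  simpa using (sum_mul_comp_eq_sum_probOf_mul p Z fun _ => 1).symm

lemma probOf_nonneg {α : Type*} [DecidableEq α] {p : Ω → ℝ} (hp : ∀ ω, 0 ≤ p ω)
    (Z : Ω → α) (a : α) : 0 ≤ probOf p Z a :=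
  Finset.sum_nonneg fun ω _ => hp ω

lemma le_probOf_apply {α : Type*} [DecidableEq α] {p : Ω → ℝ} (hp : ∀ ω, 0 ≤ p ω)
    (Z : Ω → α) (ω : Ω) : p ω ≤ probOf p Z (Z ω) :=
  Finset.single_le_sum (fun ω _ => hp ω) (by simp)

lemma entropy_eq_sum_mul_neg_log {α : Type*} [Fintype α] [DecidableEq α] (Z : Ω → α) :
    entropy p Z = ∑ ω, p ω * -Real.log (probOf p Z (Z ω)) := by
  rw [sum_mul_comp_eq_sum_probOf_mul p Z fun a => -Real.log (probOf p Z a)]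
  simp only [entropy, Real.negMulLog, neg_mul, mul_neg]

lemma entropy_congr {α β : Type*} [Fintype α] [DecidableEq α] [Fintype β] [DecidableEq β]
    {Y : Ω → α} {Z : Ω → β} (h : ∀ ω ω', Y ω = Y ω' ↔ Z ω = Z ω') :
    entropy p Y = entropy p Z := by
  simp only [entropy_eq_sum_mul_neg_log, probOf, h]

lemma entropy_eq_zero_of_const {α : Type*} [Fintype α] [DecidableEq α]
    (hp1 : ∑ ω, p ω = 1) {Z : Ω → α} (hZ : ∀ ω ω', Z ω = Z ω') : entropy p Z = 0 := by
  have hatom : ∀ ω, probOf p Z (Z ω) = 1 := fun ω => by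
    rw [probOf, Finset.filter_true_of_mem fun ω' _ => hZ ω' ω, hp1]
  simp [entropy_eq_sum_mul_neg_log, hatom]

lemma sum_probOf_prod_left {α β : Type*} [Fintype α] [DecidableEq α] [DecidableEq β]
    (U : Ω → α) (V : Ω → β) (v : β) :
    ∑ u, probOf p (fun ω => (U ω, V ω)) (u, v) = probOf p V v := by
  simp only [probOf]
  rw [← Finset.sum_fiberwise _ U, Finset.sum_congr rfl fun u _ => ?_]
  simp only [Finset.filter_filter, Prod.mk.injEq, and_comm]

lemma sum_probOf_prod_right {β γ : Type*} [DecidableEq β] [Fintype γ] [DecidableEq γ]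
    (V : Ω → β) (W : Ω → γ) (v : β) :
    ∑ w, probOf p (fun ω => (V ω, W ω)) (v, w) = probOf p V v := by
  simp only [probOf]
  rw [← Finset.sum_fiberwise _ W, Finset.sum_congr rfl fun w _ => ?_]
  simp only [Finset.filter_filter, Prod.mk.injEq]

end Entropy

section Submodularity

variable {Ω : Type*} [Fintype Ω] {p : Ω → ℝ} {α β γ : Type*}
  [Fintype α] [DecidableEq α] [Fintype β] [DecidableEq β] [Fintype γ] [DecidableEq γ]

lemma sum_probOf_mul_ratio_le (hp : ∀ ω, 0 ≤ p ω) (U : Ω → α) (V : Ω → β) (W : Ω → γ) :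
    ∑ ω, p ω * (probOf p (fun ω => (U ω, V ω)) (U ω, V ω)
        * probOf p (fun ω => (V ω, W ω)) (V ω, W ω)
        / (probOf p (fun ω => (U ω, V ω, W ω)) (U ω, V ω, W ω) * probOf p V (V ω)))
      ≤ ∑ ω, p ω := by
  set P := probOf p (fun ω => (U ω, V ω, W ω))
  set PUV := probOf p (fun ω => (U ω, V ω))
  set PVW := probOf p (fun ω => (V ω, W ω))
  rw [sum_mul_comp_eq_sum_probOf_mul p (fun ω => (U ω, V ω, W ω))
    fun x => PUV (x.1, x.2.1) * PVW x.2 / (P x * probOf p V x.2.1)]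
  calc ∑ x, P x * (PUV (x.1, x.2.1) * PVW x.2 / (P x * probOf p V x.2.1))
      ≤ ∑ x : α × β × γ, PUV (x.1, x.2.1) * PVW x.2 / probOf p V x.2.1 := by
        refine Finset.sum_le_sum fun x _ => ?_
        rcases (show 0 ≤ P x from probOf_nonneg hp _ x).eq_or_lt with h0 | hpos
        · rw [← h0, zero_mul]
          exact div_nonneg (mul_nonneg (probOf_nonneg hp _ _) (probOf_nonneg hp _ _))
            (probOf_nonneg hp _ _)
        · rw [← mul_div_assoc, mul_div_mul_left _ _ hpos.ne']
    _ = ∑ v, probOf p V v := by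
        simp only [Fintype.sum_prod_type]
        rw [Finset.sum_comm]
        refine Finset.sum_congr rfl fun v _ => ?_
        simp only [PUV, PVW, ← Finset.sum_div, ← Finset.mul_sum,
          ← Finset.sum_mul, sum_probOf_prod_left, sum_probOf_prod_right, mul_self_div_self]
    _ = ∑ ω, p ω := sum_probOf p V

lemma entropy_prod_add_entropy_le (hp : ∀ ω, 0 ≤ p ω) (U : Ω → α) (V : Ω → β) (W : Ω → γ) :
    entropy p (fun ω => (U ω, V ω, W ω)) + entropy p V
      ≤ entropy p (fun ω => (U ω, V ω)) + entropy p (fun ω => (V ω, W ω)) := by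
  simp only [entropy_eq_sum_mul_neg_log]
  have hterm := Finset.sum_le_sum fun ω (_ : ω ∈ Finset.univ) =>
    mul_log_ratio_le (hp ω) (le_probOf_apply hp (fun ω => (U ω, V ω, W ω)) ω)
      (le_probOf_apply hp (fun ω => (U ω, V ω)) ω) (le_probOf_apply hp (fun ω => (V ω, W ω)) ω)
      (le_probOf_apply hp V ω)
  simp only [mul_sub, mul_add, Finset.sum_sub_distrib, Finset.sum_add_distrib] at hterm
  simp only [mul_neg, Finset.sum_neg_distrib]
  linarith [sum_probOf_mul_ratio_le hp U V W]

end Submodularity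

def initialSegment (m k : ℕ) : Finset (Fin m) := Finset.univ.filter fun i => (i : ℕ) < k

lemma initialSegment_zero (m : ℕ) : initialSegment m 0 = ∅ := by
  simp [initialSegment]

lemma initialSegment_self (m : ℕ) : initialSegment m m = Finset.univ := by
  simp [initialSegment]

lemma initialSegment_succ {m : ℕ} (j : Fin m) :
    initialSegment m (j + 1) = insert j (initialSegment m j) := by
  ext i
  simp only [initialSegment, Finset.mem_filter, Finset.mem_univ, true_and, Finset.mem_insert,
    Fin.ext_iff]
  omega

def HasDiminishingIncrements {ι : Type*} [DecidableEq ι] (F : Finset ι → ℝ) : Prop :=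
  ∀ j T T', T ⊆ T' → F (insert j T') - F T' ≤ F (insert j T) - F T

section SetFunction

variable {m : ℕ} (F : Finset (Fin m) → ℝ)

lemma sum_sub_initialSegment_union (C : Finset (Fin m)) :
    ∑ j : Fin m, (F (C ∪ initialSegment m (j + 1)) - F (C ∪ initialSegment m j))
      = F Finset.univ - F C := by
  rw [Fin.sum_univ_eq_sum_range
      (fun k => F (C ∪ initialSegment m (k + 1)) - F (C ∪ initialSegment m k)),
    Finset.sum_range_sub (fun k => F (C ∪ initialSegment m k)), initialSegment_self,
    initialSegment_zero, Finset.union_eq_right.2 (Finset.subset_univ C), Finset.union_empty]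

variable {F}

lemma sub_compl_le_sum_increment (hF : HasDiminishingIncrements F) (B : Finset (Fin m)) :
    F Finset.univ - F Bᶜ
      ≤ ∑ j ∈ B, (F (initialSegment m (j + 1)) - F (initialSegment m j)) := by
  calc F Finset.univ - F Bᶜ
      = ∑ j : Fin m, (F (Bᶜ ∪ initialSegment m (j + 1)) - F (Bᶜ ∪ initialSegment m j)) :=
        (sum_sub_initialSegment_union F Bᶜ).symm
    _ ≤ ∑ j : Fin m,
          if j ∈ B then F (initialSegment m (j + 1)) - F (initialSegment m j) else 0 := by
        refine Finset.sum_le_sum fun j _ => ?_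
        rw [initialSegment_succ, Finset.union_insert]
        split_ifs with hj
        · exact hF j _ _ Finset.subset_union_right
        · rw [Finset.insert_eq_of_mem (Finset.mem_union_left _ (Finset.mem_compl.2 hj)), sub_self]
    _ = _ := by rw [Finset.sum_ite_mem, Finset.univ_inter]

lemma sum_mul_sub_compl_le_of_fractional_partition (hF : HasDiminishingIncrements F)
    (G : Finset (Finset (Fin m))) (lam : Finset (Fin m) → ℝ) (hlam : ∀ B ∈ G, 0 ≤ lam B)
    (hcover : ∀ j, ∑ B ∈ G.filter (fun B => j ∈ B), lam B = 1) :
    ∑ B ∈ G, lam B * (F Finset.univ - F Bᶜ) ≤ F Finset.univ - F ∅ := by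
  set d : Fin m → ℝ := fun j => F (initialSegment m (j + 1)) - F (initialSegment m j)
  calc ∑ B ∈ G, lam B * (F Finset.univ - F Bᶜ)
      ≤ ∑ B ∈ G, ∑ j ∈ B, lam B * d j := Finset.sum_le_sum fun B hB => by
        rw [← Finset.mul_sum]
        exact mul_le_mul_of_nonneg_left (sub_compl_le_sum_increment hF B) (hlam B hB)
    _ = ∑ j, (∑ B ∈ G.filter (fun B => j ∈ B), lam B) * d j := by
        simp only [Finset.sum_mul]
        exact Finset.sum_comm' fun B j => by simp [and_comm]
    _ = F Finset.univ - F ∅ := by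
        simpa [hcover, d] using sum_sub_initialSegment_union F ∅

end SetFunction

section Tuples

variable {Ω : Type*} {m : ℕ} {S : Fin m → Type*} (X : ∀ j, Ω → S j)

lemma tupleOn_eq_tupleOn_iff {T : Finset (Fin m)} {ω ω' : Ω} :
    tupleOn X T ω = tupleOn X T ω' ↔ ∀ j ∈ T, X j ω = X j ω' :=
  ⟨fun h j hj => congrFun h ⟨j, hj⟩, fun h => funext fun j => h j.1 j.2⟩

variable [Fintype Ω] (p : Ω → ℝ) [∀ j, Fintype (S j)] [∀ j, DecidableEq (S j)]

lemma entropy_eq_entropy_tupleOn {β : Type*} [Fintype β] [DecidableEq β] {Z : Ω → β}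
    {T : Finset (Fin m)} (h : ∀ ω ω', Z ω = Z ω' ↔ ∀ j ∈ T, X j ω = X j ω') :
    entropy p Z = entropy p (tupleOn X T) :=
  entropy_congr p fun ω ω' => (h ω ω').trans (tupleOn_eq_tupleOn_iff X).symm

lemma hasDiminishingIncrements_entropy_tupleOn {p : Ω → ℝ} (hp : ∀ ω, 0 ≤ p ω) :
    HasDiminishingIncrements fun T => entropy p (tupleOn X T) := by
  intro j T T' hT
  have hsub := entropy_prod_add_entropy_le hp (X j) (tupleOn X T) (tupleOn X T')
  have hUVW : entropy p (fun ω => (X j ω, tupleOn X T ω, tupleOn X T' ω))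
      = entropy p (tupleOn X (insert j T')) :=
    entropy_eq_entropy_tupleOn X p fun ω ω' => by
      simp only [Prod.ext_iff, tupleOn_eq_tupleOn_iff, Finset.forall_mem_insert]
      exact ⟨fun h => ⟨h.1, h.2.2⟩, fun h => ⟨h.1, fun i hi => h.2 i (hT hi), h.2⟩⟩
  have hUV : entropy p (fun ω => (X j ω, tupleOn X T ω)) = entropy p (tupleOn X (insert j T)) :=
    entropy_eq_entropy_tupleOn X p fun ω ω' => by
      simp only [Prod.ext_iff, tupleOn_eq_tupleOn_iff, Finset.forall_mem_insert]
  have hVW : entropy p (fun ω => (tupleOn X T ω, tupleOn X T' ω)) = entropy p (tupleOn X T') :=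
    entropy_eq_entropy_tupleOn X p fun ω ω' => by
      simp only [Prod.ext_iff, tupleOn_eq_tupleOn_iff]
      exact ⟨And.right, fun h => ⟨fun i hi => h i (hT hi), h⟩⟩
  linarith

lemma entropy_eq_entropy_tupleOn_univ :
    entropy p (fun ω j => X j ω) = entropy p (tupleOn X Finset.univ) :=
  entropy_eq_entropy_tupleOn X p fun ω ω' => by simp [funext_iff]

lemma condEntropy_tupleOn_compl (B : Finset (Fin m)) :
    condEntropy p (tupleOn X B) (tupleOn X Bᶜ)
      = entropy p (tupleOn X Finset.univ) - entropy p (tupleOn X Bᶜ) := by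
  rw [condEntropy, entropy_eq_entropy_tupleOn X p (T := Finset.univ) fun ω ω' => ?_]
  simp only [Prod.ext_iff, tupleOn_eq_tupleOn_iff, Finset.mem_compl, Finset.mem_univ,
    forall_const]
  exact ⟨fun h j => (em (j ∈ B)).elim (h.1 j) (h.2 j), fun h => ⟨fun j _ => h j, fun j _ => h j⟩⟩

lemma entropy_tupleOn_empty {p : Ω → ℝ} (hp1 : ∑ ω, p ω = 1) :
    entropy p (tupleOn X ∅) = 0 :=
  entropy_eq_zero_of_const p hp1 fun ω ω' => by simp [tupleOn_eq_tupleOn_iff]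

end Tuples

theorem fractional_partition_condEntropy_sum_le_general
    {Ω : Type*} [Fintype Ω] {m : ℕ} {S : Fin m → Type*}
    [∀ j, Fintype (S j)] [∀ j, DecidableEq (S j)]
    (p : Ω → ℝ) (hp : ∀ ω, 0 ≤ p ω) (hp1 : ∑ ω : Ω, p ω = 1)
    (X : ∀ j, Ω → S j)
    (A : Finset (Fin m))
    (lam : Finset (Fin m) → ℝ) (hlam : memLambda m A lam) :
    ∑ B ∈ Gamma m A, lam B * condEntropy p (tupleOn X B) (tupleOn X Bᶜ)
      ≤ entropy p (fun ω (j : Fin m) => X j ω) ∧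
    0 ≤ entropy p (fun ω (j : Fin m) => X j ω)
      - ∑ B ∈ Gamma m A, lam B * condEntropy p (tupleOn X B) (tupleOn X Bᶜ) := by
  have key := sum_mul_sub_compl_le_of_fractional_partition
    (hasDiminishingIncrements_entropy_tupleOn X hp) (Gamma m A) lam
    (fun B hB => (hlam.1 B hB).1) hlam.2
  simp only [condEntropy_tupleOn_compl, entropy_eq_entropy_tupleOn_univ]
  rw [entropy_tupleOn_empty X hp1, sub_zero] at key
  exact ⟨key, sub_nonneg.mpr key⟩

theorem fractional_partition_condEntropy_sum_le
    {Ω : Type*} [Fintype Ω] {m : ℕ} {S : Fin m → Type*}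
    [∀ j, Fintype (S j)] [∀ j, DecidableEq (S j)]
    (p : Ω → ℝ) (hp : ∀ ω, 0 ≤ p ω) (hp1 : ∑ ω : Ω, p ω = 1)
    (X : ∀ j, Ω → S j)
    (A : Finset (Fin m)) (hA : A.Nonempty)
    (lam : Finset (Fin m) → ℝ) (hlam : memLambda m A lam) :
    ∑ B ∈ Gamma m A, lam B * condEntropy p (tupleOn X B) (tupleOn X Bᶜ)
      ≤ entropy p (fun ω (j : Fin m) => X j ω) ∧
    0 ≤ entropy p (fun ω (j : Fin m) => X j ω)
      - ∑ B ∈ Gamma m A, lam B * condEntropy p (tupleOn X B) (tupleOn X Bᶜ) :=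
  fractional_partition_condEntropy_sum_le_general p hp hp1 X A lam hlam
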